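/- arXiv:math/0405089 — 5 statements merged into one kernel-verified Lean document; each statement's English description precedes it below -/
import Mathlib

section
/- Let x ∈ sl_n(ℂ) be the nilpotent matrix with a single Jordan block (ones on the superdiagonal, zeros elsewhere), and let S be the affine space of matrices of the form: first column arbitrary entries (y_{21},…,y_{n1}) below the (1,1) entry which is 0, ones on the superdiagonal, and zeros elsewhere. Then S is a transverse slice at x for the adjoint action: the tangent space of S at x is complementary to [x, sl_n] in sl_n. Moreover, the map sending y ∈ S to the tuple of nontrivial coefficients of its characteristic polynomial is a bijection (indeed the identity in suitable coordinates) onto ℂ^{n-1}. -/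
/-!
Write `x = regSlice n 0`. The tangent direction `regSlice n c - x` is the rank-one matrix whose
only nonzero column is `(0, c)`, and its trace pairing with `x ^ (k + 1)` is `c k`; since
`tr (x ^ j * [x, z]) = 0`, the tangent space meets `[x, gl]` trivially. The last basis vector is a
cyclic vector for `x`, so a matrix commuting with `x` is determined by its last column: the
centralizer has dimension at most `n + 1`, hence `[x, gl]` has codimension at most `n + 1`, and a
dimension count shows that the two spaces span `sl`. A scalar shift makes `z` traceless.
The same cyclic vector computes the characteristic polynomial of `regSlice n c`: Cayley–Hamilton
applied to it gives `coeff k = -c (n - 1 - k)`, an involution of `ℂⁿ`.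
-/

/-- The slice at the regular nilpotent: the matrix with ones on the superdiagonal and
arbitrary entries `c` in the first column below the `(1,1)` entry (which is `0`),
all other entries zero.  `regSlice n 0` is the single-Jordan-block nilpotent. -/
def regSlice (n : ℕ) (c : Fin n → ℂ) : Matrix (Fin (n + 1)) (Fin (n + 1)) ℂ :=
  Matrix.of fun i j =>
    if (j : ℕ) = (i : ℕ) + 1 then 1
    else if (j : ℕ) = 0 then (if h : i = 0 then 0 else c (i.pred h)) else 0

open Matrix Module

namespace RegularSlice

section CommRing

variable {R ι : Type*} [CommRing R] [Fintype ι] [DecidableEq ι]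

def ad (x : Matrix ι ι R) : Module.End R (Matrix ι ι R) :=
  LinearMap.mulLeft R x - LinearMap.mulRight R x

@[simp] lemma ad_apply (x z : Matrix ι ι R) : ad x z = x * z - z * x := rfl

lemma trace_pow_mul_ad (x z : Matrix ι ι R) (k : ℕ) : (x ^ k * ad x z).trace = 0 := by
  rw [ad_apply, mul_sub, trace_sub, ← mul_assoc, ← pow_succ, ← mul_assoc,
    trace_mul_comm (x ^ k * z), ← mul_assoc, ← pow_succ', sub_self]

lemma trace_ad (x z : Matrix ι ι R) : (ad x z).trace = 0 := by
  simpa using trace_pow_mul_ad x z 0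

def IsCyclicVector (x : Matrix ι ι R) (v : ι → R) : Prop :=
  Submodule.span R (Set.range fun k : ℕ => x ^ k *ᵥ v) = ⊤

lemma IsCyclicVector.eq_zero_of_commute {x z : Matrix ι ι R} {v : ι → R}
    (hv : IsCyclicVector x v) (hxz : Commute x z) (hz : z *ᵥ v = 0) : z = 0 := by
  have hker : Submodule.span R (Set.range fun k : ℕ => x ^ k *ᵥ v) ≤
      LinearMap.ker z.mulVecLin := by
    rw [Submodule.span_le]
    rintro _ ⟨k, rfl⟩
    simp only [SetLike.mem_coe, LinearMap.mem_ker, mulVecLin_apply]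
    rw [mulVec_mulVec, ← (hxz.pow_left k).eq, ← mulVec_mulVec, hz, mulVec_zero]
  rw [hv] at hker
  exact mulVec_injective (funext fun w => by simpa using hker Submodule.mem_top)

end CommRing

section Field

variable {K ι : Type*} [Field K] [Fintype ι] [DecidableEq ι]

lemma IsCyclicVector.finrank_ker_ad_le {x : Matrix ι ι K} {v : ι → K}
    (hv : IsCyclicVector x v) : finrank K (LinearMap.ker (ad x)) ≤ Fintype.card ι := by
  let applyAtV : LinearMap.ker (ad x) →ₗ[K] ι → K :=
    LinearMap.applyₗ v ∘ₗ Matrix.toLin'.toLinearMap ∘ₗ (LinearMap.ker (ad x)).subtype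
  have hinj : Function.Injective applyAtV := by
    refine (injective_iff_map_eq_zero applyAtV).mpr fun ⟨z, hz⟩ h => ?_
    exact Subtype.ext (hv.eq_zero_of_commute (sub_eq_zero.mp hz) h)
  simpa using LinearMap.finrank_le_finrank_of_injective hinj

lemma IsCyclicVector.card_mul_card_le_finrank_range_ad_add {x : Matrix ι ι K} {v : ι → K}
    (hv : IsCyclicVector x v) :
    Fintype.card ι * Fintype.card ι ≤ finrank K (LinearMap.range (ad x)) + Fintype.card ι := by
  have hrank := LinearMap.finrank_range_add_finrank_ker (ad x)
  have hker := hv.finrank_ker_ad_le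
  rw [finrank_matrix, finrank_self, mul_one] at hrank
  omega

lemma exists_trace_eq_zero_ad_eq [CharZero K] [Nonempty ι] (x z : Matrix ι ι K) :
    ∃ z' : Matrix ι ι K, z'.trace = 0 ∧ ad x z' = ad x z := by
  refine ⟨z - (z.trace / Fintype.card ι) • 1, ?_, ?_⟩
  · simp [Fintype.card_ne_zero]
  · simp [mul_sub, sub_mul]

lemma finrank_ker_trace_add_one [Nonempty ι] :
    finrank K (LinearMap.ker (traceLinearMap ι K K)) + 1 = Fintype.card ι * Fintype.card ι := by
  have hsurj : LinearMap.range (traceLinearMap ι K K) = ⊤ :=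
    LinearMap.range_eq_top.mpr fun a =>
      ⟨single (Classical.arbitrary ι) (Classical.arbitrary ι) a, trace_single_eq_same _ _⟩
  have hrank := LinearMap.finrank_range_add_finrank_ker (traceLinearMap ι K K)
  rw [hsurj, finrank_top, finrank_self, finrank_matrix, finrank_self, mul_one] at hrank
  omega

end Field

variable {n : ℕ}

lemma regSlice_sub_regSlice_zero (c : Fin n → ℂ) :
    regSlice n c - regSlice n 0 = vecMulVec (Fin.cons 0 c) (Pi.single 0 1) := by
  ext i j
  cases i using Fin.cases <;> cases j using Fin.cases <;> simp [regSlice, vecMulVec_apply]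

lemma regSlice_mulVec_single_zero (c : Fin n → ℂ) :
    regSlice n c *ᵥ Pi.single 0 1 = Fin.cons 0 c := by
  ext i
  cases i using Fin.cases <;> simp [regSlice]

lemma regSlice_mulVec_single_succ (c : Fin n → ℂ) (i : Fin n) :
    regSlice n c *ᵥ Pi.single i.succ 1 = Pi.single i.castSucc 1 := by
  ext j
  simp only [mulVec_single_one, col_apply, regSlice, of_apply, Pi.single_apply, Fin.ext_iff,
    Fin.val_succ, Fin.val_castSucc, Fin.val_zero]
  split_ifs <;> first | rfl | (exfalso; omega)

lemma row_regSlice_zero_castSucc (i : Fin n) :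
    (regSlice n 0).row i.castSucc = Pi.single i.succ 1 := by
  ext j
  simp only [row_apply, regSlice, of_apply, Pi.single_apply, Fin.ext_iff, Fin.val_succ,
    Fin.val_castSucc, Pi.zero_apply]
  split_ifs <;> rfl

lemma regSlice_pow_mulVec_single_last (c : Fin n → ℂ) (i : Fin (n + 1)) :
    regSlice n c ^ (i : ℕ) *ᵥ Pi.single (Fin.last n) 1 = Pi.single i.rev 1 := by
  induction i using Fin.induction with
  | zero => rw [Fin.val_zero, pow_zero, one_mulVec, Fin.rev_zero]
  | succ i ih =>
    rw [Fin.val_castSucc] at ih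
    rw [Fin.val_succ, pow_succ', ← mulVec_mulVec, ih, Fin.rev_castSucc,
      regSlice_mulVec_single_succ, Fin.rev_succ]

lemma single_zero_vecMul_regSlice_zero_pow (i : Fin (n + 1)) :
    Pi.single 0 1 ᵥ* regSlice n 0 ^ (i : ℕ) = Pi.single i 1 := by
  induction i using Fin.induction with
  | zero => rw [Fin.val_zero, pow_zero, vecMul_one]
  | succ i ih =>
    rw [Fin.val_castSucc] at ih
    rw [Fin.val_succ, pow_succ, ← vecMul_vecMul, ih, single_one_vecMul,
      row_regSlice_zero_castSucc]

lemma isCyclicVector_regSlice_zero_single_last :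
    IsCyclicVector (regSlice n 0) (Pi.single (Fin.last n) 1) := by
  refine eq_top_iff.mpr (((Pi.basisFun ℂ (Fin (n + 1))).span_eq).symm.le.trans
    (Submodule.span_mono ?_))
  rintro _ ⟨i, rfl⟩
  exact ⟨i.rev, by simp only [regSlice_pow_mulVec_single_last, Fin.rev_rev, Pi.basisFun_apply]⟩

def sliceTangent (n : ℕ) : (Fin n → ℂ) →ₗ[ℂ] Matrix (Fin (n + 1)) (Fin (n + 1)) ℂ where
  toFun c := regSlice n c - regSlice n 0
  map_add' c d := by
    simp only [regSlice_sub_regSlice_zero, ← add_vecMulVec]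
    congr 1
    ext i
    cases i using Fin.cases <;> simp
  map_smul' a c := by
    simp only [regSlice_sub_regSlice_zero, RingHom.id_apply, ← smul_vecMulVec]
    congr 1
    ext i
    cases i using Fin.cases <;> simp

lemma sliceTangent_apply (c : Fin n → ℂ) :
    sliceTangent n c = vecMulVec (Fin.cons 0 c) (Pi.single 0 1) :=
  regSlice_sub_regSlice_zero c

lemma sliceTangent_injective : Function.Injective (sliceTangent n) := by
  refine (injective_iff_map_eq_zero _).mpr fun c hc => funext fun k => ?_
  simpa [sliceTangent_apply, vecMulVec_apply] using congr_fun₂ hc k.succ 0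

lemma trace_sliceTangent (c : Fin n → ℂ) : (sliceTangent n c).trace = 0 := by
  rw [sliceTangent_apply, trace_vecMulVec, dotProduct_single_one, Fin.cons_zero]

lemma trace_regSlice_zero_pow_mul_sliceTangent (c : Fin n → ℂ) (k : Fin n) :
    (regSlice n 0 ^ (k.succ : ℕ) * sliceTangent n c).trace = c k := by
  rw [trace_mul_comm, sliceTangent_apply, vecMulVec_mul, single_zero_vecMul_regSlice_zero_pow,
    trace_vecMulVec, dotProduct_single_one, Fin.cons_succ]

lemma disjoint_range_sliceTangent_range_ad :
    Disjoint (LinearMap.range (sliceTangent n)) (LinearMap.range (ad (regSlice n 0))) := by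
  rw [Submodule.disjoint_def]
  rintro _ ⟨c, rfl⟩ ⟨z, hz⟩
  suffices c = 0 by rw [this, map_zero]
  funext k
  rw [← trace_regSlice_zero_pow_mul_sliceTangent c k, ← hz, trace_pow_mul_ad, Pi.zero_apply]

lemma range_sliceTangent_sup_range_ad :
    LinearMap.range (sliceTangent n) ⊔ LinearMap.range (ad (regSlice n 0)) =
      LinearMap.ker (traceLinearMap (Fin (n + 1)) ℂ ℂ) := by
  refine Submodule.eq_of_le_of_finrank_le (sup_le ?_ ?_) ?_
  · rintro _ ⟨c, rfl⟩
    exact trace_sliceTangent c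
  · rintro _ ⟨z, rfl⟩
    exact trace_ad _ z
  · have hsup := Submodule.finrank_sup_add_finrank_inf_eq
      (LinearMap.range (sliceTangent n)) (LinearMap.range (ad (regSlice n 0)))
    rw [disjoint_range_sliceTangent_range_ad.eq_bot, finrank_bot,
      LinearMap.finrank_range_of_inj sliceTangent_injective, finrank_fin_fun] at hsup
    have hrange :=
      (isCyclicVector_regSlice_zero_single_last (n := n)).card_mul_card_le_finrank_range_ad_add
    have hsl := finrank_ker_trace_add_one (K := ℂ) (ι := Fin (n + 1))
    simp only [Fintype.card_fin] at hrange hsl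
    omega

lemma regSlice_pow_succ_mulVec_single_last (c : Fin n → ℂ) :
    regSlice n c ^ (n + 1) *ᵥ Pi.single (Fin.last n) 1 = Fin.cons 0 c := by
  have hlast := regSlice_pow_mulVec_single_last c (Fin.last n)
  rw [Fin.val_last, Fin.rev_last] at hlast
  rw [pow_succ', ← mulVec_mulVec, hlast, regSlice_mulVec_single_zero]

lemma sum_coeff_charpoly_smul_single_rev_add_cons (c : Fin n → ℂ) :
    ∑ i : Fin (n + 1), (regSlice n c).charpoly.coeff i • Pi.single i.rev (1 : ℂ) +
      Fin.cons 0 c = 0 := by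
  set M := regSlice n c
  have hdeg : M.charpoly.natDegree = n + 1 := by
    rw [charpoly_natDegree_eq_dim, Fintype.card_fin]
  have hlead : M.charpoly.coeff (n + 1) = 1 := by
    simpa only [hdeg] using M.charpoly_monic.coeff_natDegree
  have hCH : ∑ i ∈ Finset.range (n + 2), M.charpoly.coeff i • M ^ i = 0 :=
    (Polynomial.aeval_eq_sum_range' (by omega) M).symm.trans (aeval_self_charpoly M)
  rw [Finset.sum_range_succ, hlead, one_smul] at hCH
  have hv := congr_arg (· *ᵥ Pi.single (Fin.last n) 1) hCH
  simp only [add_mulVec, sum_mulVec, smul_mulVec, zero_mulVec, M,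
    regSlice_pow_succ_mulVec_single_last] at hv
  rw [← Fin.sum_univ_eq_sum_range (fun i => _ • (_ ^ i *ᵥ _))] at hv
  simpa only [regSlice_pow_mulVec_single_last] using hv

lemma coeff_charpoly_regSlice (c : Fin n → ℂ) (k : Fin n) :
    (regSlice n c).charpoly.coeff k = -c k.rev := by
  have hentry := congr_fun (sum_coeff_charpoly_smul_single_rev_add_cons c) k.rev.succ
  simp only [Pi.add_apply, Finset.sum_apply, Pi.smul_apply, Pi.single_apply, smul_eq_mul,
    mul_ite, mul_one, mul_zero, eq_comm (a := k.rev.succ), Fin.rev_eq_iff, Fin.rev_succ,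
    Fin.rev_rev, Finset.sum_ite_eq', Finset.mem_univ, if_true, Fin.val_castSucc, Fin.cons_succ,
    Pi.zero_apply] at hentry
  exact eq_neg_of_add_eq_zero_left hentry

lemma coeff_charpoly_regSlice_bijective :
    Function.Bijective fun (c : Fin n → ℂ) (k : Fin n) => (regSlice n c).charpoly.coeff k := by
  simp only [coeff_charpoly_regSlice]
  refine Function.Involutive.bijective fun c => funext fun k => ?_
  simp

end RegularSlice

open RegularSlice in
/-- Let `x ∈ sl_{n+1}(ℂ)` be the nilpotent with a single Jordan block and let `S` be the
affine space of matrices `regSlice n c`.  Then `S` is a transverse slice at `x` for the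
adjoint action: the tangent space `{regSlice n c - x}` meets `[x, sl_{n+1}]` trivially and
together they span `sl_{n+1}`.  Moreover the map sending `y ∈ S` to the tuple of
nontrivial coefficients of its characteristic polynomial is a bijection onto `ℂⁿ`. -/
theorem regular_slice_transverse (n : ℕ) :
    (∀ c : Fin n → ℂ,
      (∃ z : Matrix (Fin (n + 1)) (Fin (n + 1)) ℂ, z.trace = 0 ∧
        regSlice n c - regSlice n 0 = regSlice n 0 * z - z * regSlice n 0) → c = 0) ∧
    (∀ m : Matrix (Fin (n + 1)) (Fin (n + 1)) ℂ, m.trace = 0 →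
      ∃ (c : Fin n → ℂ) (z : Matrix (Fin (n + 1)) (Fin (n + 1)) ℂ), z.trace = 0 ∧
        m = (regSlice n c - regSlice n 0) + (regSlice n 0 * z - z * regSlice n 0)) ∧
    Function.Bijective
      (fun c : Fin n → ℂ => fun k : Fin n => (regSlice n c).charpoly.coeff k) := by
  refine ⟨fun c ⟨z, _, hz⟩ => ?_, fun m hm => ?_, coeff_charpoly_regSlice_bijective⟩
  · exact (injective_iff_map_eq_zero _).mp sliceTangent_injective c
      (Submodule.disjoint_def.mp disjoint_range_sliceTangent_range_ad _ ⟨c, rfl⟩ ⟨z, hz.symm⟩)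
  · have hmem : m ∈ LinearMap.range (sliceTangent n) ⊔ LinearMap.range (ad (regSlice n 0)) := by
      rw [range_sliceTangent_sup_range_ad]
      exact hm
    obtain ⟨_, ⟨c, rfl⟩, _, ⟨z, rfl⟩, rfl⟩ := Submodule.mem_sup.mp hmem
    obtain ⟨z', hz'_trace, hz'⟩ := exists_trace_eq_zero_ad_eq (regSlice n 0) z
    exact ⟨c, z', hz'_trace, by rw [← ad_apply, hz']; rfl⟩
end

section
/- Let S_m ⊂ sl_{2m}(ℂ) be the set of block matrices y (with 2×2 blocks) having blocks y_{11},…,y_{m1} down the first block-column (with tr(y_{11}) = 0), identity blocks on the block superdiagonal, and zero blocks elsewhere. Then for every y ∈ S_m and every μ ∈ ℂ, the projection of ℂ^{2m} onto the first two coordinates restricts to an injective linear map ker(μ·1 - y) → ℂ². In particular, every eigenspace of y is at most two-dimensional. -/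
/-- The `(m,m)`-slice `S_m ⊂ sl_{2m}(ℂ)`: block matrices (with `2×2` blocks, indexed by
`Fin m × Fin 2`) having blocks `Y 0, …, Y (m-1)` down the first block-column, identity
blocks on the block superdiagonal, and zero blocks elsewhere. -/
def mmSlice (m : ℕ) (Y : Fin m → Matrix (Fin 2) (Fin 2) ℂ) :
    Matrix (Fin m × Fin 2) (Fin m × Fin 2) ℂ :=
  Matrix.of fun p q =>
    if (q.1 : ℕ) = 0 then Y p.1 p.2 q.2
    else if (q.1 : ℕ) = (p.1 : ℕ) + 1 then (if p.2 = q.2 then 1 else 0) else 0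


lemma mmSlice_key (m : ℕ) (hm : 0 < m) (Y : Fin m → Matrix (Fin 2) (Fin 2) ℂ)
    (μ : ℂ) (u : Fin m × Fin 2 → ℂ)
    (hu : (mmSlice m Y).mulVec u = μ • u)
    (h0 : ∀ b : Fin 2, u (⟨0, hm⟩, b) = 0) : u = 0 := by
  have main : ∀ n (hn : n < m) (a : Fin 2), u (⟨n, hn⟩, a) = 0 := by
    intro n
    induction n with
    | zero => intro hn a; exact h0 a
    | succ k ih =>
      intro hn a
      have hk : k < m := Nat.lt_of_succ_lt hn
      have heq := congrFun hu (⟨k, hk⟩, a)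
      have hval : ∀ q : Fin m × Fin 2,
          mmSlice m Y (⟨k, hk⟩, a) q * u q =
          if q = ((⟨k + 1, hn⟩ : Fin m), a) then u (⟨k + 1, hn⟩, a) else 0 := by
        rintro ⟨j, b⟩
        by_cases hj0 : (j : ℕ) = 0
        · have : j = ⟨0, hm⟩ := Fin.ext hj0
          subst this
          simp [mmSlice, h0 b, Prod.ext_iff, Fin.ext_iff]
        · by_cases hj1 : (j : ℕ) = k + 1
          · have : j = ⟨k + 1, hn⟩ := Fin.ext hj1
            subst this
            by_cases hab : a = b
            · subst hab; simp [mmSlice, hj0]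
            · simp [mmSlice, hj0, hab, Ne.symm hab, Prod.ext_iff]
          · simp [mmSlice, hj0, hj1, Prod.ext_iff, Fin.ext_iff]
      have hmv : (mmSlice m Y).mulVec u (⟨k, hk⟩, a) = u (⟨k + 1, hn⟩, a) := by
        rw [Matrix.mulVec, dotProduct]
        rw [Finset.sum_congr rfl fun q _ => hval q]
        simp
      rw [hmv] at heq
      have : u (⟨k, hk⟩, a) = 0 := ih hk a
      simpa [this] using heq
  funext p
  obtain ⟨⟨n, hn⟩, a⟩ := p
  exact main n hn a

/-- For every `y ∈ S_m` and `μ ∈ ℂ`, projection of `ℂ^{2m}` to the first two coordinates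
is injective on the eigenspace `ker(μ·1 - y)`; in particular every eigenspace of `y` is
at most two-dimensional. -/
theorem mmSlice_eigenspace_injects (m : ℕ) (hm : 0 < m)
    (Y : Fin m → Matrix (Fin 2) (Fin 2) ℂ) (hY : (Y ⟨0, hm⟩).trace = 0) :
    (∀ (μ : ℂ) (v w : Fin m × Fin 2 → ℂ),
      (mmSlice m Y).mulVec v = μ • v → (mmSlice m Y).mulVec w = μ • w →
      (∀ b : Fin 2, v (⟨0, hm⟩, b) = w (⟨0, hm⟩, b)) → v = w) ∧
    (∀ μ : ℂ,
      Module.finrank ℂ (Module.End.eigenspace (Matrix.toLin' (mmSlice m Y)) μ) ≤ 2) := by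
  have part1 : ∀ (μ : ℂ) (v w : Fin m × Fin 2 → ℂ),
      (mmSlice m Y).mulVec v = μ • v → (mmSlice m Y).mulVec w = μ • w →
      (∀ b : Fin 2, v (⟨0, hm⟩, b) = w (⟨0, hm⟩, b)) → v = w := by
    intro μ v w hv hw h0
    have huv : (mmSlice m Y).mulVec (v - w) = μ • (v - w) := by
      rw [Matrix.mulVec_sub, hv, hw, smul_sub]
    exact sub_eq_zero.mp (mmSlice_key m hm Y μ (v - w) huv (fun b => by simp [h0 b]))
  refine ⟨part1, ?_⟩
  intro μ
  set E := Module.End.eigenspace (Matrix.toLin' (mmSlice m Y)) μ with hE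
  let π : E →ₗ[ℂ] (Fin 2 → ℂ) :=
    (LinearMap.funLeft ℂ ℂ (fun b => ((⟨0, hm⟩ : Fin m), b))).comp E.subtype
  have hinj : Function.Injective π := by
    intro x y hxy
    have hx : (mmSlice m Y).mulVec x.1 = μ • x.1 := by
      have := x.2
      rw [Module.End.mem_eigenspace_iff] at this
      simpa [Matrix.toLin'_apply] using this
    have hy : (mmSlice m Y).mulVec y.1 = μ • y.1 := by
      have := y.2
      rw [Module.End.mem_eigenspace_iff] at this
      simpa [Matrix.toLin'_apply] using this
    exact Subtype.ext (part1 μ x.1 y.1 hx hy (fun b => congrFun hxy b))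
  calc Module.finrank ℂ E ≤ Module.finrank ℂ (Fin 2 → ℂ) :=
        LinearMap.finrank_le_finrank_of_injective hinj
    _ = 2 := by simp
end

section
/- With S_m ⊂ sl_{2m}(ℂ) as above, an element y ∈ S_m has two-dimensional kernel if and only if its bottom block y_{m1} = 0. The set of such y is canonically identified with S_{m-1} ⊂ sl_{2m-2}(ℂ) by restricting y to the subspace ℂ^{2m-2} × {0}² (which contains the image of y); under this identification, if y has eigenvalues (0,0,μ₃,…,μ_{2m}) counted with multiplicity, then the corresponding element of S_{m-1} has eigenvalues (μ₃,…,μ_{2m}), i.e. the characteristic polynomial of y equals t² times that of its image in S_{m-1}. -/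
/-- Zero-extension of a vector on the first `2m-2` coordinates to `ℂ^{2m}`. -/
def zeroExt (k : ℕ) (v : Fin k × Fin 2 → ℂ) : Fin (k + 1) × Fin 2 → ℂ :=
  fun p => if h : (p.1 : ℕ) < k then v (⟨p.1, h⟩, p.2) else 0

lemma mmSlice_mulVec {m : ℕ} (hm : 0 < m) (Y : Fin m → Matrix (Fin 2) (Fin 2) ℂ)
    (v : Fin m × Fin 2 → ℂ) (p : Fin m) (i : Fin 2) :
    (mmSlice m Y).mulVec v (p, i)
      = (∑ j, Y p i j * v (⟨0, hm⟩, j))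
        + (if h : (p : ℕ) + 1 < m then v (⟨(p : ℕ) + 1, h⟩, i) else 0) := by
  classical
  simp only [Matrix.mulVec, dotProduct, mmSlice, Matrix.of_apply]
  rw [Fintype.sum_prod_type]
  have hsum : ∀ q : Fin m,
      (∑ j, (if ((q : ℕ)) = 0 then Y p i j
        else if (q : ℕ) = (p : ℕ) + 1 then (if i = j then (1:ℂ) else 0) else 0) * v (q, j))
      = (if q = ⟨0, hm⟩ then ∑ j, Y p i j * v (⟨0, hm⟩, j) else 0)
        + (if h : (p:ℕ) + 1 < m then (if q = ⟨(p:ℕ)+1, h⟩ then v (q, i) else 0) else 0) := by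
    intro q
    by_cases h0 : (q : ℕ) = 0
    · have hq : q = ⟨0, hm⟩ := Fin.ext h0
      subst hq
      simp only [h0, if_true, if_pos rfl]
      rw [eq_comm, add_eq_left]
      split_ifs with h1 h2
      · simp only [Fin.ext_iff] at h2; omega
      · rfl
      · rfl
    · have hq : q ≠ ⟨0, hm⟩ := fun h => h0 (by simp [h])
      simp only [h0, if_false, if_neg hq, zero_add]
      by_cases h1 : (q : ℕ) = (p : ℕ) + 1
      · have hlt : (p : ℕ) + 1 < m := h1 ▸ q.isLt
        rw [dif_pos hlt, if_pos (Fin.ext h1)]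
        simp only [h1, if_true]
        rw [Finset.sum_eq_single i]
        · simp
        · intro b _ hb; simp [Ne.symm hb]
        · simp
      · simp only [h1, if_false]
        split_ifs with h2 h3
        · exact absurd (Fin.ext_iff.mp h3) h1
        · simp
        · simp
  rw [Finset.sum_congr rfl (fun q _ => hsum q), Finset.sum_add_distrib]
  congr 1
  · rw [Finset.sum_ite_eq' Finset.univ (⟨0, hm⟩ : Fin m)]
    simp
  · split_ifs with h
    · rw [Finset.sum_ite_eq' Finset.univ (⟨(p:ℕ)+1, h⟩ : Fin m)]; simp
    · simp

section Ker
variable (k : ℕ) (Y : Fin (k + 1) → Matrix (Fin 2) (Fin 2) ℂ)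

/-- extension of `w ∈ ker Y_last` to an element of `ker A`. -/
noncomputable def vext (w : Fin 2 → ℂ) : Fin (k + 1) × Fin 2 → ℂ :=
  fun p => if (p.1 : ℕ) = 0 then w p.2
    else -∑ j, Y ⟨(p.1 : ℕ) - 1, Nat.lt_of_le_of_lt (Nat.sub_le _ _) p.1.isLt⟩ p.2 j * w j

lemma vext_linear (w w' : Fin 2 → ℂ) (c : ℂ) :
    vext k Y (w + w') = vext k Y w + vext k Y w' ∧
    vext k Y (c • w) = c • vext k Y w := by
  constructor <;> funext p <;> simp only [vext, Pi.add_apply, Pi.smul_apply, smul_eq_mul] <;>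
    split_ifs <;>
    simp [mul_add, Finset.sum_add_distrib, Finset.mul_sum, mul_left_comm, mul_comm] <;> ring

lemma mem_ker_iff (v : Fin (k + 1) × Fin 2 → ℂ) :
    (mmSlice (k + 1) Y).mulVec v = 0 ↔
      ((Y (Fin.last k)).mulVec (fun j => v (⟨0, Nat.succ_pos k⟩, j)) = 0 ∧
        v = vext k Y (fun j => v (⟨0, Nat.succ_pos k⟩, j))) := by
  constructor
  · intro hv
    have hv' : ∀ (p : Fin (k+1)) (i : Fin 2), (mmSlice (k+1) Y).mulVec v (p, i) = 0 := by
      intro p i; rw [hv]; rfl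
    constructor
    · funext i
      have := hv' (Fin.last k) i
      rw [mmSlice_mulVec (Nat.succ_pos k)] at this
      rw [dif_neg (by simp [Fin.last])] at this
      simpa [Matrix.mulVec, dotProduct] using this
    · funext ⟨p, i⟩
      by_cases hp : (p : ℕ) = 0
      · have : p = ⟨0, Nat.succ_pos k⟩ := Fin.ext hp
        rw [this, vext, if_pos rfl]
      · have hp1 : (p : ℕ) - 1 + 1 < k + 1 := by omega
        have := hv' ⟨(p : ℕ) - 1, Nat.lt_of_le_of_lt (Nat.sub_le _ _) p.isLt⟩ i
        rw [mmSlice_mulVec (Nat.succ_pos k), dif_pos hp1] at this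
        have hpe : (⟨(p : ℕ) - 1 + 1, hp1⟩ : Fin (k+1)) = p := Fin.ext (by simp only [Fin.val_mk]; omega)
        rw [hpe] at this
        rw [vext, if_neg hp]
        have := eq_neg_of_add_eq_zero_right this
        rw [this]
  · rintro ⟨hw, hv⟩
    set w : Fin 2 → ℂ := fun j => v (⟨0, Nat.succ_pos k⟩, j) with hwdef
    rw [hv]
    funext ⟨p, i⟩
    rw [mmSlice_mulVec (Nat.succ_pos k)]
    have hz : ∀ j, vext k Y w (⟨0, Nat.succ_pos k⟩, j) = w j := by
      intro j; simp [vext]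
    simp only [hz]
    by_cases hp : (p : ℕ) + 1 < k + 1
    · rw [dif_pos hp]
      have h1 : ((⟨(p:ℕ)+1, hp⟩ : Fin (k+1)) : ℕ) ≠ 0 := by simp
      have h2 : (⟨((⟨(p:ℕ)+1, hp⟩ : Fin (k+1)) : ℕ) - 1,
          Nat.lt_of_le_of_lt (Nat.sub_le _ _) (Fin.isLt _)⟩ : Fin (k+1)) = p :=
        Fin.ext (by simp only [Fin.val_mk]; omega)
      show _ + vext k Y w (⟨(p:ℕ)+1, hp⟩, i) = _
      rw [vext, if_neg h1, h2]
      simp only [Pi.zero_apply, Fin.sum_univ_two]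
      ring
    · rw [dif_neg hp]
      have hpl : p = Fin.last k := Fin.ext (by have := p.isLt; simp only [Fin.val_last]; omega)
      have := congrFun hw i
      simp only [Matrix.mulVec, dotProduct, Pi.zero_apply] at this
      rw [add_zero, hpl]
      simpa using this
end Ker

noncomputable def kerEquiv (k : ℕ) (Y : Fin (k + 1) → Matrix (Fin 2) (Fin 2) ℂ) :
    LinearMap.ker (Matrix.toLin' (mmSlice (k + 1) Y)) ≃ₗ[ℂ]
      LinearMap.ker (Matrix.toLin' (Y (Fin.last k))) where
  toFun v := ⟨fun j => v.1 (⟨0, Nat.succ_pos k⟩, j), by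
    rw [LinearMap.mem_ker, Matrix.toLin'_apply]
    have hv := v.2
    rw [LinearMap.mem_ker, Matrix.toLin'_apply] at hv
    exact ((mem_ker_iff k Y v.1).mp hv).1⟩
  map_add' v v' := rfl
  map_smul' c v := rfl
  invFun w := ⟨vext k Y w.1, by
    rw [LinearMap.mem_ker, Matrix.toLin'_apply]
    have hw := w.2
    rw [LinearMap.mem_ker, Matrix.toLin'_apply] at hw
    have hz : (fun j => vext k Y w.1 (⟨0, Nat.succ_pos k⟩, j)) = w.1 := by
      funext j; simp [vext]
    refine (mem_ker_iff k Y _).mpr ⟨?_, ?_⟩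
    · rw [hz]; exact hw
    · rw [hz]⟩
  left_inv v := by
    apply Subtype.ext
    have hv := v.2
    rw [LinearMap.mem_ker, Matrix.toLin'_apply] at hv
    exact (((mem_ker_iff k Y v.1).mp hv).2).symm
  right_inv w := by
    apply Subtype.ext
    funext j
    simp [vext]

lemma finrank_ker_eq (k : ℕ) (Y : Fin (k + 1) → Matrix (Fin 2) (Fin 2) ℂ) :
    Module.finrank ℂ (LinearMap.ker (Matrix.toLin' (mmSlice (k + 1) Y)))
      = Module.finrank ℂ (LinearMap.ker (Matrix.toLin' (Y (Fin.last k)))) :=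
  (kerEquiv k Y).finrank_eq

lemma finrank_ker_two_iff (M : Matrix (Fin 2) (Fin 2) ℂ) :
    Module.finrank ℂ (LinearMap.ker (Matrix.toLin' M)) = 2 ↔ M = 0 := by
  constructor
  · intro h
    have h2 : Module.finrank ℂ (Fin 2 → ℂ) = 2 := Module.finrank_fin_fun ℂ
    have := Submodule.eq_top_of_finrank_eq (h.trans h2.symm)
    rw [LinearMap.ker_eq_top] at this
    have := Matrix.toLin'.injective (this.trans (map_zero Matrix.toLin').symm)
    exact this
  · intro h
    subst h
    rw [map_zero, LinearMap.ker_zero, finrank_top]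
    exact Module.finrank_fin_fun ℂ


lemma mulVec_zeroExt (k : ℕ) (Y : Fin (k + 1) → Matrix (Fin 2) (Fin 2) ℂ)
    (hlast : Y (Fin.last k) = 0) (v : Fin k × Fin 2 → ℂ) :
    (mmSlice (k + 1) Y).mulVec (zeroExt k v)
      = zeroExt k ((mmSlice k (fun i => Y i.castSucc)).mulVec v) := by
  funext ⟨p, i⟩
  rw [mmSlice_mulVec (Nat.succ_pos k)]
  rcases Nat.eq_zero_or_pos k with hk | hk
  · subst hk
    have hpl : p = Fin.last 0 := Fin.ext (by omega)
    simp [zeroExt, hpl, hlast]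
  · have hz : ∀ j, zeroExt k v (⟨0, Nat.succ_pos k⟩, j) = v (⟨0, hk⟩, j) := by
      intro j; simp [zeroExt, hk]
    simp only [hz]
    by_cases hp : (p : ℕ) < k
    · rw [zeroExt]
      rw [dif_pos hp]
      rw [mmSlice_mulVec hk]
      have hc : (⟨(p:ℕ), hp⟩ : Fin k).castSucc = p := Fin.ext rfl
      rw [hc]
      congr 1
      rw [dif_pos (by omega : (p:ℕ) + 1 < k + 1)]
      by_cases hp1 : (p : ℕ) + 1 < k
      · rw [dif_pos hp1, zeroExt, dif_pos (show (((⟨(p:ℕ)+1, by omega⟩ : Fin (k+1)) : ℕ)) < k from hp1)]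
      · rw [dif_neg hp1, zeroExt, dif_neg (show ¬(((⟨(p:ℕ)+1, by omega⟩ : Fin (k+1)) : ℕ)) < k from hp1)]
    · have hpl : p = Fin.last k := Fin.ext (by have := p.isLt; simp only [Fin.val_last]; omega)
      rw [zeroExt, dif_neg hp, hpl, hlast]
      rw [dif_neg (by simp [Fin.last])]
      simp

noncomputable def blockC (k : ℕ) (Y : Fin (k + 1) → Matrix (Fin 2) (Fin 2) ℂ) :
    Matrix (Fin k × Fin 2) (Fin 1 × Fin 2) ℂ :=
  Matrix.of fun p q => if (k : ℕ) = (p.1 : ℕ) + 1 then (if p.2 = q.2 then 1 else 0) else 0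

lemma charpoly_eq (k : ℕ) (Y : Fin (k + 1) → Matrix (Fin 2) (Fin 2) ℂ)
    (hlast : Y (Fin.last k) = 0) :
    (mmSlice (k + 1) Y).charpoly
      = Polynomial.X ^ 2 * (mmSlice k (fun i => Y i.castSucc)).charpoly := by
  classical
  set e : (Fin k × Fin 2) ⊕ (Fin 1 × Fin 2) ≃ Fin (k + 1) × Fin 2 :=
    (Equiv.sumProdDistrib (Fin k) (Fin 1) (Fin 2)).symm.trans
      (Equiv.prodCongr finSumFinEquiv (Equiv.refl (Fin 2))) with he
  have heL : ∀ (a : Fin k) (i : Fin 2), e (Sum.inl (a, i)) = (Fin.castAdd 1 a, i) := by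
    intro a i; rfl
  have heR : ∀ (b : Fin 1) (i : Fin 2), e (Sum.inr (b, i)) = (Fin.natAdd k b, i) := by
    intro b i; rfl
  have hre : Matrix.reindex e.symm e.symm (mmSlice (k + 1) Y)
      = Matrix.fromBlocks (mmSlice k (fun i => Y i.castSucc)) (blockC k Y) 0 0 := by
    ext x y
    rcases x with ⟨a, i⟩ | ⟨a, i⟩ <;> rcases y with ⟨b, j⟩ | ⟨b, j⟩ <;>
      simp only [Matrix.reindex_apply, Matrix.submatrix_apply, Equiv.symm_symm, heL, heR,
        Matrix.fromBlocks_apply₁₁, Matrix.fromBlocks_apply₁₂, Matrix.fromBlocks_apply₂₁,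
        Matrix.fromBlocks_apply₂₂, mmSlice, blockC, Matrix.of_apply, Fin.coe_castAdd,
        Fin.coe_natAdd, Matrix.zero_apply]
    · have hc : Y (Fin.castAdd 1 a) = Y a.castSucc := rfl
      rw [hc]
    · have ha : (a : ℕ) + 1 ≤ k := a.isLt
      have hb : (b : ℕ) = 0 := by omega
      simp only [hb, add_zero]
      split_ifs with h1 h2 h3 <;> first | rfl | omega
    · have ha : (a : ℕ) = 0 := by omega
      have hY : Y ⟨k + (a : ℕ), by omega⟩ = 0 := by
        have hq : (⟨k + (a : ℕ), by omega⟩ : Fin (k + 1)) = Fin.last k :=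
          Fin.ext (by simp [ha])
        rw [hq]; exact hlast
      have hfin : (Fin.natAdd k a : Fin (k + 1)) = ⟨k + (a : ℕ), by omega⟩ := rfl
      have hblt := b.isLt
      split_ifs with h1 h2 <;> first | (rw [hfin, hY]; rfl) | omega | rfl
    · have ha : (a : ℕ) = 0 := by omega
      have hY : Y ⟨k + (a : ℕ), by omega⟩ = 0 := by
        have hq : (⟨k + (a : ℕ), by omega⟩ : Fin (k + 1)) = Fin.last k :=
          Fin.ext (by simp [ha])
        rw [hq]; exact hlast
      have hfin : (Fin.natAdd k a : Fin (k + 1)) = ⟨k + (a : ℕ), by omega⟩ := rfl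
      have hb : (b : ℕ) = 0 := by omega
      split_ifs with h1 h2 <;> first | (rw [hfin, hY]; rfl) | omega | rfl
  have h0 : (0 : Matrix (Fin 1 × Fin 2) (Fin 1 × Fin 2) ℂ).charpoly = Polynomial.X ^ 2 := by
    have hcm : Matrix.charmatrix (0 : Matrix (Fin 1 × Fin 2) (Fin 1 × Fin 2) ℂ)
        = Matrix.diagonal (fun _ => Polynomial.X) := by
      ext i j
      by_cases h : i = j
      · subst h; simp
      · rw [Matrix.charmatrix_apply_ne _ _ _ h, Matrix.diagonal_apply_ne _ h]; simp
    rw [Matrix.charpoly, hcm, Matrix.det_diagonal, Finset.prod_const]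
    simp
  calc (mmSlice (k + 1) Y).charpoly
      = (Matrix.reindex e.symm e.symm (mmSlice (k + 1) Y)).charpoly :=
        (Matrix.charpoly_reindex e.symm _).symm
    _ = (Matrix.fromBlocks (mmSlice k (fun i => Y i.castSucc)) (blockC k Y) 0 0).charpoly := by
        rw [hre]
    _ = (mmSlice k (fun i => Y i.castSucc)).charpoly
          * (0 : Matrix (Fin 1 × Fin 2) (Fin 1 × Fin 2) ℂ).charpoly :=
        Matrix.charpoly_fromBlocks_zero₂₁ _ _ _
    _ = Polynomial.X ^ 2 * (mmSlice k (fun i => Y i.castSucc)).charpoly := by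
        rw [h0, mul_comm]

/-- An element `y ∈ S_m` (here `m = k+1`) has two-dimensional kernel iff its bottom block
`y_{m1}` vanishes.  The set of such `y` is canonically identified with `S_{m-1}` by
restriction to `ℂ^{2m-2} × {0}²` (which contains `im(y)`): the restricted action agrees
with that of the element of `S_{m-1}` with blocks `Y 0, …, Y (m-2)`, and the
characteristic polynomial of `y` is `t²` times that of its image in `S_{m-1}`. -/
theorem mmSlice_two_dim_kernel (k : ℕ) (Y : Fin (k + 1) → Matrix (Fin 2) (Fin 2) ℂ)
    (hY : (Y 0).trace = 0) :
    (Module.finrank ℂ (LinearMap.ker (Matrix.toLin' (mmSlice (k + 1) Y))) = 2 ↔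
      Y (Fin.last k) = 0) ∧
    (Y (Fin.last k) = 0 →
      (∀ v : Fin k × Fin 2 → ℂ,
        (mmSlice (k + 1) Y).mulVec (zeroExt k v)
          = zeroExt k ((mmSlice k (fun i => Y i.castSucc)).mulVec v)) ∧
      (mmSlice (k + 1) Y).charpoly
        = Polynomial.X ^ 2 * (mmSlice k (fun i => Y i.castSucc)).charpoly) := by
  refine ⟨?_, fun h => ⟨fun v => mulVec_zeroExt k Y h v, charpoly_eq k Y h⟩⟩
  rw [finrank_ker_eq k Y]
  exact finrank_ker_two_iff (Y (Fin.last k))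
end

section
/- Let S_m ⊂ sl_{2m}(ℂ) be the space of block matrices with blocks y_{11},…,y_{m1} (tr y_{11} = 0) in the first block column, 2×2 identity blocks on the block superdiagonal, and zeros elsewhere; let n⁺ ∈ S_m be the element with all y_{i1} = 0. Then S_m is a transverse slice at n⁺ for the adjoint SL_{2m}(ℂ)-action: (i) if z ∈ sl_{2m} is such that [n⁺, z] has nonzero entries only in the first two columns, then [n⁺, z] = 0; (ii) the tangent space T_{n⁺}S_m (of complex dimension 4m - 1) is a complement to [n⁺, sl_{2m}] in sl_{2m}. -/
/-- The tangent space of the slice `S_m` at `n⁺`: trace-free matrices supported on the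
first block-column. -/
noncomputable def mmTangent (m : ℕ) : Submodule ℂ (Matrix (Fin m × Fin 2) (Fin m × Fin 2) ℂ) where
  carrier := {v | (∀ p q, (q.1 : ℕ) ≠ 0 → v p q = 0) ∧ v.trace = 0}
  add_mem' := by
    rintro a b ⟨ha1, ha2⟩ ⟨hb1, hb2⟩
    exact ⟨fun p q h => by simp [Matrix.add_apply, ha1 p q h, hb1 p q h],
      by simp [ha2, hb2]⟩
  zero_mem' := ⟨fun p q h => rfl, by simp⟩
  smul_mem' := by
    rintro c a ⟨ha1, ha2⟩
    exact ⟨fun p q h => by simp [Matrix.smul_apply, ha1 p q h], by simp [ha2]⟩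


namespace MMAux

variable {m : ℕ}

lemma nplus_apply (p r : Fin m × Fin 2) :
    mmSlice m 0 p r = if (r.1 : ℕ) = (p.1 : ℕ) + 1 ∧ p.2 = r.2 then 1 else 0 := by
  unfold mmSlice
  simp only [Matrix.of_apply, Pi.zero_apply, Matrix.zero_apply]
  by_cases h0 : (r.1 : ℕ) = 0
  · rw [if_pos h0, eq_comm, if_neg]
    rintro ⟨h1, _⟩; omega
  · rw [if_neg h0]
    by_cases h1 : (r.1 : ℕ) = (p.1 : ℕ) + 1 <;> by_cases h2 : p.2 = r.2 <;>
      simp [h1, h2]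

lemma mul_n_left (z : Matrix (Fin m × Fin 2) (Fin m × Fin 2) ℂ) (p q : Fin m × Fin 2) :
    (mmSlice m 0 * z) p q =
      if h : (p.1 : ℕ) + 1 < m then z (⟨(p.1 : ℕ) + 1, h⟩, p.2) q else 0 := by
  rw [Matrix.mul_apply]
  split_ifs with h
  · rw [Finset.sum_eq_single ((⟨(p.1 : ℕ) + 1, h⟩ : Fin m), p.2)]
    · rw [nplus_apply, if_pos ⟨rfl, rfl⟩, one_mul]
    · intro r _ hr
      rw [nplus_apply, if_neg, zero_mul]
      rintro ⟨h1, h2⟩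
      exact hr (Prod.ext (Fin.ext h1) h2.symm)
    · intro hmem; exact absurd (Finset.mem_univ _) hmem
  · apply Finset.sum_eq_zero
    intro r _
    rw [nplus_apply, if_neg, zero_mul]
    rintro ⟨h1, _⟩
    exact h (h1 ▸ r.1.isLt)

lemma n_mul_right (z : Matrix (Fin m × Fin 2) (Fin m × Fin 2) ℂ) (p q : Fin m × Fin 2) :
    (z * mmSlice m 0) p q =
      if 0 < (q.1 : ℕ) then
        z p (⟨(q.1 : ℕ) - 1, lt_of_le_of_lt (Nat.sub_le _ _) q.1.isLt⟩, q.2) else 0 := by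
  rw [Matrix.mul_apply]
  split_ifs with h
  · rw [Finset.sum_eq_single
        ((⟨(q.1 : ℕ) - 1, lt_of_le_of_lt (Nat.sub_le _ _) q.1.isLt⟩ : Fin m), q.2)]
    · rw [nplus_apply, if_pos ⟨by dsimp only; omega, rfl⟩, mul_one]
    · intro r _ hr
      rw [nplus_apply, if_neg, mul_zero]
      rintro ⟨h1, h2⟩
      exact hr (Prod.ext (Fin.ext (by simp at h1 ⊢; omega)) h2)
    · intro hmem; exact absurd (Finset.mem_univ _) hmem
  · apply Finset.sum_eq_zero
    intro r _
    rw [nplus_apply, if_neg, mul_zero]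
    rintro ⟨h1, _⟩
    omega

lemma comm_apply (z : Matrix (Fin m × Fin 2) (Fin m × Fin 2) ℂ) (p q : Fin m × Fin 2) :
    (mmSlice m 0 * z - z * mmSlice m 0) p q =
      (if h : (p.1 : ℕ) + 1 < m then z (⟨(p.1 : ℕ) + 1, h⟩, p.2) q else 0) -
      (if 0 < (q.1 : ℕ) then
        z p (⟨(q.1 : ℕ) - 1, lt_of_le_of_lt (Nat.sub_le _ _) q.1.isLt⟩, q.2) else 0) := by
  rw [Matrix.sub_apply, mul_n_left, n_mul_right]

lemma part1 (z : Matrix (Fin m × Fin 2) (Fin m × Fin 2) ℂ)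
    (H : ∀ p q, (q.1 : ℕ) ≠ 0 → (mmSlice m 0 * z - z * mmSlice m 0) p q = 0) :
    mmSlice m 0 * z - z * mmSlice m 0 = 0 := by
  have key : ∀ k, ∀ p q : Fin m × Fin 2, m - (p.1 : ℕ) ≤ k → (q.1 : ℕ) < (p.1 : ℕ) →
      z p q = 0 := by
    intro k
    induction k with
    | zero => intro p q hk _; exact absurd hk (by have := p.1.isLt; omega)
    | succ k ih =>
      intro p q hk hlt
      have hq1 : (q.1 : ℕ) + 1 < m := by have := p.1.isLt; omega
      have hH := H p (⟨(q.1 : ℕ) + 1, hq1⟩, q.2) (by simp)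
      rw [comm_apply] at hH
      simp only [if_pos (Nat.succ_pos _)] at hH
      have hq : ((⟨(q.1 : ℕ) + 1 - 1, lt_of_le_of_lt (Nat.sub_le _ _) hq1⟩ : Fin m), q.2) = q :=
        Prod.ext (Fin.ext (by dsimp only; omega)) rfl
      rw [hq] at hH
      split_ifs at hH with h
      · rw [sub_eq_zero] at hH
        rw [← hH]
        exact ih _ _ (by dsimp only; omega) (by dsimp only; omega)
      · rw [zero_sub, neg_eq_zero] at hH
        exact hH
  ext p q
  rw [Matrix.zero_apply]
  by_cases hq : (q.1 : ℕ) = 0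
  · rw [comm_apply, if_neg (by omega), sub_zero]
    split_ifs with h
    · exact key m _ _ (by dsimp only; omega) (by dsimp only; omega)
    · rfl
  · exact H p q hq

end MMAux

namespace MM3

variable {m : ℕ}

noncomputable def GG (m : ℕ) (w : Matrix (Fin m × Fin 2) (Fin m × Fin 2) ℂ)
    (a b : Fin 2) (x y : ℕ) : ℂ :=
  if h : x < m ∧ y < m then w (⟨x, h.1⟩, a) (⟨y, h.2⟩, b) else 0

noncomputable def zc (m : ℕ) (w : Matrix (Fin m × Fin 2) (Fin m × Fin 2) ℂ) :
    Matrix (Fin m × Fin 2) (Fin m × Fin 2) ℂ :=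
  Matrix.of fun p q =>
    -∑ d ∈ Finset.range m, GG m w p.2 q.2 ((p.1 : ℕ) + d) ((q.1 : ℕ) + 1 + d)

set_option linter.unusedVariables false in
lemma sum_step (w : Matrix (Fin m × Fin 2) (Fin m × Fin 2) ℂ) (a b : Fin 2)
    (i j : ℕ) (hi : i < m) :
    ∑ d ∈ Finset.range m, GG m w a b (i + d) (j + d)
      = GG m w a b i j + ∑ d ∈ Finset.range m, GG m w a b (i + 1 + d) (j + 1 + d) := by
  have h1 : ∑ d ∈ Finset.range m, GG m w a b (i + d) (j + d)
      = ∑ d ∈ Finset.range (m + 1), GG m w a b (i + d) (j + d) := by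
    rw [Finset.sum_range_succ, GG, dif_neg (by omega), add_zero]
  rw [h1, Finset.sum_range_succ', add_comm]
  congr 1
  apply Finset.sum_congr rfl
  intro d _
  rw [show i + (d + 1) = i + 1 + d by omega, show j + (d + 1) = j + 1 + d by omega]

lemma sum_vanish (w : Matrix (Fin m × Fin 2) (Fin m × Fin 2) ℂ) (a b : Fin 2)
    (i j : ℕ) (hi : m ≤ i) :
    ∑ d ∈ Finset.range m, GG m w a b (i + d) (j + d) = 0 :=
  Finset.sum_eq_zero fun d _ => dif_neg (by omega)

lemma comm_zc (w : Matrix (Fin m × Fin 2) (Fin m × Fin 2) ℂ) (p q : Fin m × Fin 2)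
    (hq : (q.1 : ℕ) ≠ 0) :
    (mmSlice m 0 * zc m w - zc m w * mmSlice m 0) p q = w p q := by
  rw [MMAux.comm_apply, if_pos (show 0 < (q.1 : ℕ) by omega)]
  have hwpq : w p q = GG m w p.2 q.2 (p.1 : ℕ) (q.1 : ℕ) := by
    rw [GG, dif_pos ⟨p.1.isLt, q.1.isLt⟩]
  have e2 : zc m w p (⟨(q.1 : ℕ) - 1, lt_of_le_of_lt (Nat.sub_le _ _) q.1.isLt⟩, q.2)
      = -∑ d ∈ Finset.range m, GG m w p.2 q.2 ((p.1 : ℕ) + d) ((q.1 : ℕ) + d) := by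
    show -∑ d ∈ Finset.range m, _ = _
    congr 1
    apply Finset.sum_congr rfl
    intro d _
    congr 1
    dsimp only
    omega
  rw [e2]
  split_ifs with h
  · have e1 : zc m w (⟨(p.1 : ℕ) + 1, h⟩, p.2) q
        = -∑ d ∈ Finset.range m, GG m w p.2 q.2 ((p.1 : ℕ) + 1 + d) ((q.1 : ℕ) + 1 + d) := rfl
    rw [e1, sum_step w p.2 q.2 _ _ p.1.isLt, hwpq]
    ring
  · rw [sum_step w p.2 q.2 _ _ p.1.isLt,
      sum_vanish w p.2 q.2 ((p.1 : ℕ) + 1) ((q.1 : ℕ) + 1) (by omega), hwpq]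
    ring

end MM3

namespace MM4

variable {m : ℕ}

lemma trace_comm (z : Matrix (Fin m × Fin 2) (Fin m × Fin 2) ℂ) :
    (mmSlice m 0 * z - z * mmSlice m 0).trace = 0 := by
  rw [Matrix.trace_sub, Matrix.trace_mul_comm, sub_self]

lemma trace_supported (hm : 0 < m) (v : Matrix (Fin m × Fin 2) (Fin m × Fin 2) ℂ)
    (hsupp : ∀ p q, (q.1 : ℕ) ≠ 0 → v p q = 0) :
    v.trace = v (⟨0, hm⟩, 0) (⟨0, hm⟩, 0) + v (⟨0, hm⟩, 1) (⟨0, hm⟩, 1) := by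
  rw [Matrix.trace]
  simp only [Matrix.diag]
  rw [Fintype.sum_prod_type]
  rw [Finset.sum_eq_single (⟨0, hm⟩ : Fin m)]
  · rw [Fin.sum_univ_two]
  · intro i _ hi
    apply Finset.sum_eq_zero
    intro a _
    exact hsupp _ _ (fun h => hi (Fin.ext h))
  · intro h; exact absurd (Finset.mem_univ _) h

lemma part3 (hm : 0 < m) (w : Matrix (Fin m × Fin 2) (Fin m × Fin 2) ℂ) (hw : w.trace = 0) :
    ∃ v ∈ mmTangent m, ∃ z : Matrix (Fin m × Fin 2) (Fin m × Fin 2) ℂ,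
      z.trace = 0 ∧ w = v + (mmSlice m 0 * z - z * mmSlice m 0) := by
  have hm2 : ((m : ℂ) * 2) ≠ 0 := by
    have : (m : ℂ) ≠ 0 := Nat.cast_ne_zero.mpr hm.ne'
    simpa using this
  set z1 := MM3.zc m w with hz1
  set c : ℂ := z1.trace / ((m : ℂ) * 2) with hc
  set z : Matrix (Fin m × Fin 2) (Fin m × Fin 2) ℂ := z1 - c • (1 : Matrix _ _ ℂ) with hz
  have htrz : z.trace = 0 := by
    rw [hz, Matrix.trace_sub, Matrix.trace_smul, Matrix.trace_one]
    have hcard : (Fintype.card (Fin m × Fin 2) : ℂ) = (m : ℂ) * 2 := by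
      simp [Fintype.card_prod]
    rw [hcard, hc, smul_eq_mul, div_mul_cancel₀ _ hm2, sub_self]
  have hcomm : mmSlice m 0 * z - z * mmSlice m 0
      = mmSlice m 0 * z1 - z1 * mmSlice m 0 := by
    rw [hz, Matrix.mul_sub, Matrix.sub_mul, Matrix.mul_smul, Matrix.smul_mul,
      mul_one, one_mul]
    abel
  set v := w - (mmSlice m 0 * z - z * mmSlice m 0) with hv
  have hvsupp : ∀ p q, (q.1 : ℕ) ≠ 0 → v p q = 0 := by
    intro p q h
    rw [hv, Matrix.sub_apply, hcomm, MM3.comm_zc w p q h, sub_self]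
  have hvtr : v.trace = 0 := by
    rw [hv, Matrix.trace_sub, hw, trace_comm, sub_self]
  exact ⟨v, ⟨hvsupp, hvtr⟩, z, htrz, by rw [hv]; abel⟩

end MM4

namespace MM5

variable {m : ℕ}

noncomputable def L (hm : 0 < m) : Matrix (Fin m × Fin 2) (Fin 2) ℂ →ₗ[ℂ] ℂ where
  toFun A := A (⟨0, hm⟩, 0) 0 + A (⟨0, hm⟩, 1) 1
  map_add' A B := by simp [Matrix.add_apply]; ring
  map_smul' c A := by simp [Matrix.smul_apply]; ring

noncomputable def T (hm : 0 < m) : mmTangent m →ₗ[ℂ] Matrix (Fin m × Fin 2) (Fin 2) ℂ where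
  toFun v := Matrix.of fun p b => v.1 p (⟨0, hm⟩, b)
  map_add' v w := by ext p b; simp
  map_smul' c v := by ext p b; simp

lemma T_inj (hm : 0 < m) : Function.Injective (T hm) := by
  rw [injective_iff_map_eq_zero]
  intro v h
  ext p q
  by_cases hq : (q.1 : ℕ) = 0
  · have hq' : q = (⟨0, hm⟩, q.2) := Prod.ext (Fin.ext hq) rfl
    have := congrFun (congrFun h p) q.2
    rw [hq']
    simpa [T] using this
  · exact v.2.1 p q hq

lemma T_range (hm : 0 < m) : LinearMap.range (T hm) = LinearMap.ker (L hm) := by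
  ext A
  constructor
  · rintro ⟨v, rfl⟩
    have := v.2.2
    rw [MM4.trace_supported hm v.1 v.2.1] at this
    simpa [LinearMap.mem_ker, L, T] using this
  · intro hA
    rw [LinearMap.mem_ker] at hA
    refine ⟨⟨Matrix.of fun p q => if (q.1 : ℕ) = 0 then A p q.2 else 0, ?_, ?_⟩, ?_⟩
    · intro p q h; simp [h]
    · rw [MM4.trace_supported hm _ (fun p q h => by simp [h])]
      simpa [L] using hA
    · ext p b
      simp [T]

lemma L_surj (hm : 0 < m) : LinearMap.range (L hm) = ⊤ := by
  rw [LinearMap.range_eq_top]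
  intro c
  exact ⟨Matrix.of fun p b => if p = (⟨0, hm⟩, 0) ∧ b = 0 then c else 0, by
    simp [L]⟩

lemma finrank_tangent (hm : 0 < m) : Module.finrank ℂ (mmTangent m) = 4 * m - 1 := by
  have e1 : Module.finrank ℂ (mmTangent m)
      = Module.finrank ℂ (LinearMap.ker (L hm)) := by
    rw [← T_range hm]
    exact (LinearEquiv.ofInjective (T hm) (T_inj hm)).finrank_eq
  have e2 := LinearMap.finrank_range_add_finrank_ker (L hm)
  rw [L_surj hm] at e2
  have e3 : Module.finrank ℂ (⊤ : Submodule ℂ ℂ) = 1 := by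
    rw [finrank_top]; exact Module.finrank_self ℂ
  have e4 : Module.finrank ℂ (Matrix (Fin m × Fin 2) (Fin 2) ℂ) = 4 * m := by
    rw [Module.finrank_matrix]
    simp [Fintype.card_prod]
    ring
  rw [e3, e4] at e2
  omega

end MM5

/-- `S_m` is a transverse slice at `n⁺ = mmSlice m 0` for the adjoint `SL_{2m}(ℂ)`-action:
(i) if `z ∈ sl_{2m}` is such that `[n⁺, z]` has nonzero entries only in the first two
columns, then `[n⁺, z] = 0`; (ii) the tangent space `T_{n⁺}S_m` (of complex dimension
`4m - 1`) is a complement to `[n⁺, sl_{2m}]` in `sl_{2m}`. -/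
theorem mmSlice_transverse (m : ℕ) (hm : 0 < m) :
    (∀ z : Matrix (Fin m × Fin 2) (Fin m × Fin 2) ℂ, z.trace = 0 →
      (∀ p q, (q.1 : ℕ) ≠ 0 → (mmSlice m 0 * z - z * mmSlice m 0) p q = 0) →
      mmSlice m 0 * z - z * mmSlice m 0 = 0) ∧
    (∀ v ∈ mmTangent m,
      (∃ z : Matrix (Fin m × Fin 2) (Fin m × Fin 2) ℂ, z.trace = 0 ∧
        v = mmSlice m 0 * z - z * mmSlice m 0) → v = 0) ∧
    (∀ w : Matrix (Fin m × Fin 2) (Fin m × Fin 2) ℂ, w.trace = 0 →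
      ∃ v ∈ mmTangent m, ∃ z : Matrix (Fin m × Fin 2) (Fin m × Fin 2) ℂ,
        z.trace = 0 ∧ w = v + (mmSlice m 0 * z - z * mmSlice m 0)) ∧
    Module.finrank ℂ (mmTangent m) = 4 * m - 1 := by
  refine ⟨fun z _ H => MMAux.part1 z H, ?_, fun w hw => MM4.part3 hm w hw,
    MM5.finrank_tangent hm⟩
  rintro v hv ⟨z, hz, hvz⟩
  rw [hvz]
  apply MMAux.part1
  intro p q h
  rw [← hvz]
  exact hv.1 p q h
end

section
/- For the function π_d(a,b,c) = a³ - a·d + b·c on ℂ³ with the standard Hermitian metric, and for any bounded ball B ⊂ ℂ³, there is a constant ν > 0, independent of d, such that for all (a,b,c) ∈ B and all d in a bounded set: ‖∇π_d‖² ≥ ν^{-1}·|d|^{1/2}·min(|π_d - ζ_d^+|, |π_d - ζ_d^-|), where ζ_d^± are the two critical values of π_d and ‖∇π_d‖² = 4|b|² + 4|c|² + |3a² - d|². -/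
/-! With `d = 3s²` the critical points of `π_d` are `a = ±s`, and
`π_d - (s³ - sd) = (a - s)²(a + 2s) + bc`, `3a² - d = 3(a - s)(a + s)`.
If `a` is at least as close to `s` as to `-s`, the triangle inequality gives `|s| ≤ |a + s|` and
`|a + 2s| ≤ 2|a + s|`, so `|d|^{1/2}|a - s|²|a + 2s| ≤ 4|a - s|²|a + s|² ≤ |3a² - d|²`, while
`|bc| ≤ |b|² + |c|²`; the other case is the same with `-s` for `s`. The constant `ν = 1 + √R`
makes `ν⁻¹|d|^{1/2} ≤ 1`. -/

open Real

section CriticalValue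

variable {R : Type*} [CommRing R] {a b c d s : R}

theorem cubic_sub_critical_value_eq (hd : d = 3 * s ^ 2) :
    (a ^ 3 - a * d + b * c) - (s ^ 3 - s * d) = (a - s) ^ 2 * (a + 2 * s) + b * c := by
  rw [hd]; ring

theorem three_mul_sq_sub_eq (hd : d = 3 * s ^ 2) : 3 * a ^ 2 - d = 3 * ((a - s) * (a + s)) := by
  rw [hd]; ring

end CriticalValue

section NormEstimates

theorem norm_le_norm_add_of_norm_sub_le {E : Type*} [SeminormedAddCommGroup E] [NormedSpace ℝ E]
    {a s : E} (h : ‖a - s‖ ≤ ‖a + s‖) : ‖s‖ ≤ ‖a + s‖ := by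
  have h2s : ‖(2 : ℝ) • s‖ = 2 * ‖s‖ := by rw [norm_smul, Real.norm_two]
  have : (2 : ℝ) • s = (a + s) - (a - s) := by rw [two_smul]; abel
  linarith [norm_sub_le (a + s) (a - s), h2s.symm.trans (congrArg norm this)]

variable {𝕜 : Type*} [RCLike 𝕜] {a s d : 𝕜}

theorem sqrt_norm_mul_norm_le_norm_sq (hd : d = 3 * s ^ 2) (h : ‖a - s‖ ≤ ‖a + s‖) :
    √‖d‖ * ‖(a - s) ^ 2 * (a + 2 * s)‖ ≤ ‖3 * a ^ 2 - d‖ ^ 2 := by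
  have hs : ‖s‖ ≤ ‖a + s‖ := norm_le_norm_add_of_norm_sub_le h
  have hsqrt : √‖d‖ ≤ 2 * ‖s‖ := (sqrt_le_left (by positivity)).2 <| by
    rw [hd, norm_mul, norm_pow, RCLike.norm_ofNat]
    nlinarith [sq_nonneg ‖s‖]
  have h2s : ‖a + 2 * s‖ ≤ 2 * ‖a + s‖ := by
    calc ‖a + 2 * s‖ = ‖(a + s) + s‖ := by ring_nf
      _ ≤ ‖a + s‖ + ‖s‖ := norm_add_le _ _
      _ ≤ 2 * ‖a + s‖ := by linarith
  rw [three_mul_sq_sub_eq hd, norm_mul, norm_mul, norm_mul, norm_pow, RCLike.norm_ofNat]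
  calc √‖d‖ * (‖a - s‖ ^ 2 * ‖a + 2 * s‖)
      ≤ (2 * ‖a + s‖) * (‖a - s‖ ^ 2 * (2 * ‖a + s‖)) := by gcongr; linarith
    _ ≤ (3 * (‖a - s‖ * ‖a + s‖)) ^ 2 := by nlinarith [sq_nonneg (‖a - s‖ * ‖a + s‖)]

end NormEstimates

section GradientEstimate

variable {𝕜 : Type*} [RCLike 𝕜] {ν : ℝ} {a b c d s : 𝕜}

theorem gradient_estimate_of_norm_sub_le (hν : 1 ≤ ν) (hdν : √‖d‖ ≤ ν) (hd : d = 3 * s ^ 2)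
    (h : ‖a - s‖ ≤ ‖a + s‖) :
    ν⁻¹ * √‖d‖ * ‖(a ^ 3 - a * d + b * c) - (s ^ 3 - s * d)‖
      ≤ 4 * ‖b‖ ^ 2 + 4 * ‖c‖ ^ 2 + ‖3 * a ^ 2 - d‖ ^ 2 := by
  have hν0 : 0 < ν := by linarith
  have hscale_le_one : ν⁻¹ * √‖d‖ ≤ 1 := by rw [inv_mul_le_iff₀ hν0]; linarith
  have hscale_le : ν⁻¹ * √‖d‖ ≤ √‖d‖ :=
    mul_le_of_le_one_left (sqrt_nonneg _) (inv_le_one_of_one_le₀ hν)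
  have hP := sqrt_norm_mul_norm_le_norm_sq (a := a) hd h
  rw [cubic_sub_critical_value_eq hd]
  calc ν⁻¹ * √‖d‖ * ‖(a - s) ^ 2 * (a + 2 * s) + b * c‖
      ≤ ν⁻¹ * √‖d‖ * (‖(a - s) ^ 2 * (a + 2 * s)‖ + ‖b‖ * ‖c‖) := by
        rw [← norm_mul b c]; gcongr; exact norm_add_le _ _
    _ ≤ √‖d‖ * ‖(a - s) ^ 2 * (a + 2 * s)‖ + ‖b‖ * ‖c‖ := by
        rw [mul_add]
        exact add_le_add (mul_le_mul_of_nonneg_right hscale_le (norm_nonneg _))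
          (mul_le_of_le_one_left (by positivity) hscale_le_one)
    _ ≤ _ := by nlinarith [sq_nonneg (‖b‖ - ‖c‖), sq_nonneg ‖b‖, sq_nonneg ‖c‖]

theorem gradient_estimate (hν : 1 ≤ ν) (hdν : √‖d‖ ≤ ν) (hs : s ^ 2 = d / 3) :
    ν⁻¹ * √‖d‖ *
        min ‖(a ^ 3 - a * d + b * c) - (s ^ 3 - s * d)‖ ‖(a ^ 3 - a * d + b * c) + (s ^ 3 - s * d)‖
      ≤ 4 * ‖b‖ ^ 2 + 4 * ‖c‖ ^ 2 + ‖3 * a ^ 2 - d‖ ^ 2 := by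
  have hd : d = 3 * s ^ 2 := by rw [hs]; ring
  have hscale_nonneg : 0 ≤ ν⁻¹ * √‖d‖ := mul_nonneg (inv_nonneg.2 (by linarith)) (sqrt_nonneg _)
  rcases le_total ‖a - s‖ ‖a + s‖ with h | h
  · exact (mul_le_mul_of_nonneg_left (min_le_left _ _) hscale_nonneg).trans
      (gradient_estimate_of_norm_sub_le hν hdν hd h)
  · have hd' : d = 3 * (-s) ^ 2 := by rw [hd]; ring
    have h' : ‖a - -s‖ ≤ ‖a + -s‖ := by rwa [sub_neg_eq_add, ← sub_eq_add_neg]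
    have key := gradient_estimate_of_norm_sub_le (b := b) (c := c) hν hdν hd' h'
    rw [show (a ^ 3 - a * d + b * c) - ((-s) ^ 3 - (-s) * d)
        = (a ^ 3 - a * d + b * c) + (s ^ 3 - s * d) by ring] at key
    exact (mul_le_mul_of_nonneg_left (min_le_right _ _) hscale_nonneg).trans key

end GradientEstimate

theorem gradient_estimate_A2_general (R : ℝ) :
    ∃ ν : ℝ, 0 < ν ∧ ∀ a b c d s : ℂ,
      ‖a‖ ≤ R → ‖b‖ ≤ R → ‖c‖ ≤ R → ‖d‖ ≤ R →
      s ^ 2 = d / 3 →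
      ν⁻¹ * Real.sqrt (‖d‖) *
          min (‖(a ^ 3 - a * d + b * c) - (s ^ 3 - s * d)‖)
              (‖(a ^ 3 - a * d + b * c) + (s ^ 3 - s * d)‖)
        ≤ 4 * ‖b‖ ^ 2 + 4 * ‖c‖ ^ 2 +
            ‖3 * a ^ 2 - d‖ ^ 2 := by
  refine ⟨1 + √R, by positivity, fun a b c d s _ _ _ hd hs => ?_⟩
  have hdν : √‖d‖ ≤ 1 + √R := by linarith [sqrt_le_sqrt hd]
  exact gradient_estimate (by linarith [sqrt_nonneg R]) hdν hs

/-- Gradient estimate for `π_d(a,b,c) = a³ - a·d + b·c` on `ℂ³` with the standard metric: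
for any bounded ball (of radius `R`) there is a constant `ν > 0`, independent of `d`
(for `d` in a bounded set), such that
`‖∇π_d‖² ≥ ν⁻¹ · |d|^{1/2} · min(|π_d - ζ_d^+|, |π_d - ζ_d^-|)`,
where `ζ_d^± = ±(s³ - s·d)` (for `s² = d/3`) are the two critical values of `π_d`,
and `‖∇π_d‖² = 4|b|² + 4|c|² + |3a² - d|²`. -/
theorem gradient_estimate_A2 (R : ℝ) (hR : 0 < R) :
    ∃ ν : ℝ, 0 < ν ∧ ∀ a b c d s : ℂ,
      ‖a‖ ≤ R → ‖b‖ ≤ R → ‖c‖ ≤ R → ‖d‖ ≤ R →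
      s ^ 2 = d / 3 →
      ν⁻¹ * Real.sqrt (‖d‖) *
          min (‖(a ^ 3 - a * d + b * c) - (s ^ 3 - s * d)‖)
              (‖(a ^ 3 - a * d + b * c) + (s ^ 3 - s * d)‖)
        ≤ 4 * ‖b‖ ^ 2 + 4 * ‖c‖ ^ 2 +
            ‖3 * a ^ 2 - d‖ ^ 2 :=
  gradient_estimate_A2_general R
end
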